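/- arXiv:0908.0390 — 3 statements merged into one kernel-verified Lean document; each statement's English description precedes it below -/
import Mathlib

section
/- Let n, f be natural numbers with n > 5f, let P be a multiset of n real numbers, and let U be a submultiset of P of cardinality m with m ≥ n − f. Then the extreme correct robots satisfy the election predicate irrespective of the positions of the Byzantine robots: min U ≤ P_{f+1} and P_{n−f} ≤ max U. -/
/-- `kth P k` is the `k`-th smallest element (1-based, counted with multiplicity)
of the multiset `P` of reals. -/
noncomputable def kth (P : Multiset ℝ) (k : ℕ) : ℝ :=
  (P.sort (· ≤ ·)).getD (k - 1) 0

/-- The minimum of a (nonempty) multiset of reals: its 1st smallest element. -/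
noncomputable def mmin (U : Multiset ℝ) : ℝ := kth U 1

/-- The maximum of a (nonempty) multiset of reals: its `card`-th smallest element. -/
noncomputable def mmax (U : Multiset ℝ) : ℝ := kth U (Multiset.card U)

/-! At least `f + 1` elements of `P` are `≤ P_{f+1}`, while `U` omits at most `f` elements
of `P` (counted with multiplicity), so some element of `U` is `≤ P_{f+1}`; symmetrically, at
least `f + 1` elements are `≥ P_{n-f}`, so some element of `U` is `≥ P_{n-f}`. -/

namespace List.SortedLE

variable {α : Type*} [LinearOrder α] {l : List α} {k : ℕ}

lemma succ_le_length_filter_le (hl : l.SortedLE) (hk : k < l.length) :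
    k + 1 ≤ (l.filter (fun x => decide (x ≤ l[k]))).length := by
  have hprefix : (l.take (k + 1)).filter (fun x => decide (x ≤ l[k])) = l.take (k + 1) := by
    refine List.filter_eq_self.mpr fun x hx => ?_
    obtain ⟨j, hj, rfl⟩ := List.mem_take_iff_getElem.mp hx
    simpa using hl.getElem_le_getElem_of_le (by omega : j ≤ k)
  calc k + 1 = ((l.take (k + 1)).filter (fun x => decide (x ≤ l[k]))).length := by
        rw [hprefix, List.length_take]; omega
    _ ≤ (l.filter (fun x => decide (x ≤ l[k]))).length :=
        ((List.take_sublist _ _).filter _).length_le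

lemma length_sub_le_length_filter_ge (hl : l.SortedLE) (hk : k < l.length) :
    l.length - k ≤ (l.filter (fun x => decide (l[k] ≤ x))).length := by
  have hsuffix : (l.drop k).filter (fun x => decide (l[k] ≤ x)) = l.drop k := by
    refine List.filter_eq_self.mpr fun x hx => ?_
    obtain ⟨j, hj, rfl⟩ := List.mem_drop_iff_getElem.mp hx
    simpa using hl.getElem_le_getElem_of_le (by omega : k ≤ k + j)
  calc l.length - k = ((l.drop k).filter (fun x => decide (l[k] ≤ x))).length := by
        rw [hsuffix, List.length_drop]
    _ ≤ (l.filter (fun x => decide (l[k] ≤ x))).length :=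
        ((List.drop_sublist _ _).filter _).length_le

end List.SortedLE

namespace Multiset

lemma exists_mem_of_card_lt_card_add_card_filter {α : Type*} {U P : Multiset α}
    (hUP : U ≤ P) (p : α → Prop) [DecidablePred p]
    (h : card P < card U + card (P.filter p)) : ∃ x ∈ U, p x := by
  by_contra! hU
  have hsub : U ≤ P.filter (¬ p ·) :=
    (filter_eq_self.mpr hU).symm.le.trans (filter_le_filter _ hUP)
  have hsplit := congrArg card (filter_add_not p P)
  rw [card_add] at hsplit
  have := card_le_card hsub
  omega

lemma sortedLE_sort {α : Type*} [LinearOrder α] (P : Multiset α) :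
    (P.sort (fun a b : α => a ≤ b)).SortedLE :=
  List.sortedLE_iff_pairwise.mpr (P.pairwise_sort _)

end Multiset

open Multiset

lemma kth_succ_eq_getElem {P : Multiset ℝ} {k : ℕ} (hk : k < card P) :
    kth P (k + 1) = (P.sort (· ≤ ·))[k]'(by rwa [length_sort]) := by
  rw [kth, Nat.add_sub_cancel, List.getD_eq_getElem]

lemma mmin_le_of_mem {U : Multiset ℝ} {x : ℝ} (hx : x ∈ U) : mmin U ≤ x := by
  obtain ⟨i, hi, rfl⟩ :=
    List.mem_iff_getElem.mp ((mem_sort (r := fun a b : ℝ => a ≤ b)).mpr hx)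
  rw [mmin, kth_succ_eq_getElem (card_pos_iff_exists_mem.mpr ⟨_, hx⟩)]
  exact (sortedLE_sort U).getElem_le_getElem_of_le (Nat.zero_le i)

lemma le_mmax_of_mem {U : Multiset ℝ} {x : ℝ} (hx : x ∈ U) : x ≤ mmax U := by
  obtain ⟨i, hi, rfl⟩ :=
    List.mem_iff_getElem.mp ((mem_sort (r := fun a b : ℝ => a ≤ b)).mpr hx)
  have hU : 0 < card U := card_pos_iff_exists_mem.mpr ⟨_, hx⟩
  rw [mmax, ← Nat.sub_add_cancel hU, kth_succ_eq_getElem (by omega)]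
  exact (sortedLE_sort U).getElem_le_getElem_of_le (by rw [length_sort] at hi; omega)

lemma succ_le_card_filter_le_kth {P : Multiset ℝ} {k : ℕ} (hk : k < card P) :
    k + 1 ≤ card (P.filter (· ≤ kth P (k + 1))) := by
  rw [kth_succ_eq_getElem hk, ← congrArg (filter _) (sort_eq P (· ≤ ·)), filter_coe, coe_card]
  exact (sortedLE_sort P).succ_le_length_filter_le _

lemma card_sub_le_card_filter_kth_le {P : Multiset ℝ} {k : ℕ} (hk : k < card P) :
    card P - k ≤ card (P.filter (kth P (k + 1) ≤ ·)) := by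
  rw [kth_succ_eq_getElem hk, ← congrArg (filter _) (sort_eq P (· ≤ ·)), filter_coe, coe_card]
  simpa using (sortedLE_sort P).length_sub_le_length_filter_ge (by rwa [length_sort])

theorem stmt_4 (n f : ℕ) (hnf : n > 5 * f) (P U : Multiset ℝ)
    (hP : Multiset.card P = n) (hUP : U ≤ P) (m : ℕ) (hm : Multiset.card U = m)
    (hmf : m ≥ n - f) :
    mmin U ≤ kth P (f + 1) ∧ kth P (n - f) ≤ mmax U := by
  have hf : f < card P := by omega
  constructor
  · have hlow := succ_le_card_filter_le_kth hf
    obtain ⟨x, hxU, hx⟩ :=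
      exists_mem_of_card_lt_card_add_card_filter hUP (· ≤ kth P (f + 1)) (by omega)
    exact (mmin_le_of_mem hxU).trans hx
  · obtain ⟨k, hk⟩ : ∃ k, n - f = k + 1 := ⟨n - f - 1, by omega⟩
    have hhigh := card_sub_le_card_filter_kth_le (P := P) (k := k) (by omega)
    rw [hk]
    obtain ⟨x, hxU, hx⟩ :=
      exists_mem_of_card_lt_card_add_card_filter hUP (kth P (k + 1) ≤ ·) (by omega)
    exact hx.trans (le_mmax_of_mem hxU)
end

section
/- Let n, f be natural numbers with n > 5f, let P be a multiset of n real numbers, and let U be a submultiset of P of cardinality m with m ≥ n − f. If p is an element of U satisfying the election predicate, i.e., p ≤ P_{f+1} or p ≥ P_{n−f}, then p ≤ U_{f+1} or p ≥ U_{m−f}; that is, only correct robots at the extremes of the correct positions can be elected. -/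
namespace List

variable {α : Type*} [Preorder α] {l₁ l₂ : List α}

theorem Sublist.getElem_le_getElem_of_sortedLE_of_le (h : l₁ <+ l₂) (hl₂ : l₂.SortedLE)
    {i j : ℕ} (hi : i < l₁.length) (hj : j < l₂.length) (hji : j ≤ i) : l₂[j] ≤ l₁[i] := by
  induction h generalizing i j with
  | slnil => simp at hi
  | @cons l₁ l₂ a h ih =>
    have hlen := h.length_le
    calc (a :: l₂)[j] ≤ (a :: l₂)[j + 1]'(by simp; omega) :=
          hl₂.getElem_le_getElem_of_le (Nat.le_succ j)
      _ = l₂[j] := rfl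
      _ ≤ l₁[i] := ih hl₂.pairwise.of_cons.sortedLE hi (by omega) hji
  | @cons_cons l₁ l₂ a h ih =>
    match i, j with
    | 0, 0 => exact le_rfl
    | i + 1, 0 => exact (pairwise_cons.mp hl₂.pairwise).1 _ (h.subset (getElem_mem _))
    | i + 1, j + 1 =>
      exact ih hl₂.pairwise.of_cons.sortedLE (Nat.lt_of_succ_lt_succ hi)
        (Nat.lt_of_succ_lt_succ hj) (Nat.le_of_succ_le_succ hji)

theorem Sublist.getElem_le_getElem_of_sortedLE_of_length_sub_le (h : l₁ <+ l₂)
    (hl₂ : l₂.SortedLE) {i j : ℕ} (hi : i < l₁.length) (hj : j < l₂.length)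
    (hij : l₂.length - j ≤ l₁.length - i) : l₁[i] ≤ l₂[j] := by
  induction h generalizing i j with
  | slnil => simp at hi
  | @cons l₁ l₂ a h ih =>
    have hlen := h.length_le
    match j with
    | 0 => simp only [length_cons, Nat.sub_zero] at hij; omega
    | j + 1 => exact ih hl₂.pairwise.of_cons.sortedLE hi (by simpa using hj) (by simpa using hij)
  | @cons_cons l₁ l₂ a h ih =>
    match i, j with
    | 0, j => exact hl₂.getElem_le_getElem_of_le (hi := by simp) (Nat.zero_le j)
    | i + 1, 0 => simp only [length_cons, Nat.sub_zero] at hij; have := h.length_le; omega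
    | i + 1, j + 1 =>
      exact ih hl₂.pairwise.of_cons.sortedLE (Nat.lt_of_succ_lt_succ hi)
        (Nat.lt_of_succ_lt_succ hj) (by simpa using hij)

end List

theorem Multiset.sort_sublist_sort_of_le {α : Type*} [LinearOrder α] {s t : Multiset α}
    (h : s ≤ t) : (s.sort (· ≤ ·)).Sublist (t.sort (· ≤ ·)) :=
  List.sublist_of_subperm_of_pairwise (Multiset.coe_le.mp (by simpa only [Multiset.sort_eq]))
    (Multiset.pairwise_sort _ _) (Multiset.pairwise_sort _ _)

theorem kth_eq_getElem {P : Multiset ℝ} {k : ℕ} (hk : k - 1 < Multiset.card P) :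
    kth P k = (P.sort (· ≤ ·))[k - 1]'(by rwa [Multiset.length_sort]) := by
  simp [kth, hk]

theorem kth_le_kth_of_le {U P : Multiset ℝ} (hUP : U ≤ P) {k : ℕ} (hk₀ : 0 < k)
    (hk : k ≤ Multiset.card U) : kth P k ≤ kth U k := by
  have hcard := Multiset.card_le_card hUP
  rw [kth_eq_getElem (by omega), kth_eq_getElem (by omega)]
  exact (Multiset.sort_sublist_sort_of_le hUP).getElem_le_getElem_of_sortedLE_of_le
    (Multiset.pairwise_sort _ _).sortedLE _ _ le_rfl

theorem kth_le_kth_add_card_sub_of_le {U P : Multiset ℝ} (hUP : U ≤ P) {k : ℕ} (hk₀ : 0 < k)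
    (hk : k ≤ Multiset.card U) :
    kth U k ≤ kth P (k + (Multiset.card P - Multiset.card U)) := by
  have hcard := Multiset.card_le_card hUP
  rw [kth_eq_getElem (by omega), kth_eq_getElem (by omega)]
  exact (Multiset.sort_sublist_sort_of_le hUP).getElem_le_getElem_of_sortedLE_of_length_sub_le
    (Multiset.pairwise_sort _ _).sortedLE _ _ (by simp only [Multiset.length_sort]; omega)

theorem stmt_8_general (n f : ℕ) (hnf : n > 5 * f) (P U : Multiset ℝ)
    (hP : Multiset.card P = n) (hUP : U ≤ P) (m : ℕ) (hm : Multiset.card U = m)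
    (hmf : m ≥ n - f) (p : ℝ)
    (helected : p ≤ kth P (f + 1) ∨ p ≥ kth P (n - f)) :
    p ≤ kth U (f + 1) ∨ p ≥ kth U (m - f) := by
  have hmn : m ≤ n := hm ▸ hP ▸ Multiset.card_le_card hUP
  rcases helected with hlow | hhigh
  · exact .inl (hlow.trans (kth_le_kth_of_le hUP (by omega) (by omega)))
  · have hshift := kth_le_kth_add_card_sub_of_le hUP (k := m - f) (by omega) (by omega)
    rw [hP, hm, show m - f + (n - m) = n - f by omega] at hshift
    exact .inr (hshift.trans hhigh)

theorem stmt_8 (n f : ℕ) (hnf : n > 5 * f) (P U : Multiset ℝ)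
    (hP : Multiset.card P = n) (hUP : U ≤ P) (m : ℕ) (hm : Multiset.card U = m)
    (hmf : m ≥ n - f) (p : ℝ) (hp : p ∈ U)
    (helected : p ≤ kth P (f + 1) ∨ p ≥ kth P (n - f)) :
    p ≤ kth U (f + 1) ∨ p ≥ kth U (m - f) :=
  stmt_8_general n f hnf P U hP hUP m hm hmf p helected
end

section
/- Let n, f be natural numbers with n > 5f, let P be a multiset of n real numbers, and let U be a submultiset of P of cardinality m with m ≥ n − f. Then for every element p of U, the computed destination satisfies (p + min U)/2 ≤ dest(P,p) ≤ (p + max U)/2; that is, the destination of a correct robot at position p always lies between the midpoint of p with the smallest correct position and the midpoint of p with the largest correct position, irrespective of the positions of the Byzantine robots. -/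
/-- The destination computed by Algorithm 1 by a robot at position `p` observing
the configuration `P` of `n` robots (at most `f` Byzantine): the midpoint of the
trimmed range `[min(p, P_{2f+1}), max(p, P_{n-2f})]`. -/
noncomputable def dest (n f : ℕ) (P : Multiset ℝ) (p : ℝ) : ℝ :=
  (min p (kth P (2 * f + 1)) + max p (kth P (n - 2 * f))) / 2

/-!
Let `U` be a submultiset of `P` missing fewer than `k` of its elements. The `k` smallest elements
of `P` then contain an element of `U`, so `min U ≤ P_k`; dually, when `k ≤ |U|` the elements
`P_k, …, P_{|P|}` contain an element of `U`, so `P_k ≤ max U`. With `|U| ≥ n - f` and `n > 5f`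
this bounds the trimmed range of the algorithm: `min U ≤ P_{2f+1}` and `P_{n-2f} ≤ max U`.
Hence `min U ≤ min(p, P_{2f+1}) ≤ p ≤ max(p, P_{n-2f}) ≤ max U`, and the midpoint of the trimmed
range lies between `(p + min U)/2` and `(p + max U)/2`.
-/

namespace Multiset

theorem exists_mem_mem_of_card_lt_add {α : Type*} {s t u : Multiset α}
    (hs : s ≤ u) (ht : t ≤ u) (h : card u < card s + card t) : ∃ x ∈ s, x ∈ t := by
  classical
  have hcard : card (s ∪ t) + card (s ∩ t) = card s + card t := by
    rw [← card_add, union_add_inter, card_add]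
  have hunion : card (s ∪ t) ≤ card u := card_le_card (union_le hs ht)
  obtain ⟨x, hx⟩ := card_pos_iff_exists_mem.mp (show 0 < card (s ∩ t) by omega)
  exact ⟨x, (mem_inter.mp hx).1, (mem_inter.mp hx).2⟩

end Multiset

section OrderStatistics

variable {P U : Multiset ℝ}

theorem kth_succ_eq_getElem_s9 {i : ℕ} (hi : i < (P.sort (· ≤ ·)).length) :
    kth P (i + 1) = (P.sort (· ≤ ·))[i] :=
  List.getD_eq_getElem _ _ hi

theorem sort_getElem_le_getElem {i j : ℕ} (hij : i ≤ j) (hj : j < (P.sort (· ≤ ·)).length) :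
    (P.sort (· ≤ ·))[i] ≤ (P.sort (· ≤ ·))[j] :=
  (P.pairwise_sort (· ≤ ·)).sortedLE.getElem_le_getElem_of_le hij

theorem mmin_le {x : ℝ} (hx : x ∈ U) : mmin U ≤ x := by
  obtain ⟨i, hi, rfl⟩ := List.getElem_of_mem ((U.mem_sort (· ≤ ·)).mpr hx)
  calc mmin U = (U.sort (· ≤ ·))[0] := kth_succ_eq_getElem_s9 (by omega)
    _ ≤ (U.sort (· ≤ ·))[i] := sort_getElem_le_getElem (Nat.zero_le i) hi

theorem le_mmax {x : ℝ} (hx : x ∈ U) : x ≤ mmax U := by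
  obtain ⟨i, hi, rfl⟩ := List.getElem_of_mem ((U.mem_sort (· ≤ ·)).mpr hx)
  have hlen : (U.sort (· ≤ ·)).length = Multiset.card U := Multiset.length_sort _
  have hlast : Multiset.card U - 1 < (U.sort (· ≤ ·)).length := by omega
  calc (U.sort (· ≤ ·))[i] ≤ (U.sort (· ≤ ·))[Multiset.card U - 1] :=
        sort_getElem_le_getElem (by omega) hlast
    _ = mmax U := by
        rw [mmax, ← kth_succ_eq_getElem_s9 hlast, Nat.sub_add_cancel (by omega)]

theorem mmin_le_kth {k : ℕ} (hUP : U ≤ P) (hk : k ≤ Multiset.card P)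
    (hmissing : Multiset.card P < Multiset.card U + k) : mmin U ≤ kth P k := by
  set l := P.sort (· ≤ ·)
  have hlen : l.length = Multiset.card P := Multiset.length_sort _
  have hsmallest : (↑(l.take k) : Multiset ℝ) ≤ P := by
    rw [← P.sort_eq (· ≤ ·), Multiset.coe_le]
    exact (List.take_sublist _ _).subperm
  obtain ⟨q, hq, hqU⟩ := Multiset.exists_mem_mem_of_card_lt_add hUP hsmallest (by
    simp only [Multiset.coe_card, List.length_take, hlen]
    omega)
  obtain ⟨i, hi, rfl⟩ := List.getElem_of_mem (Multiset.mem_coe.mp hqU)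
  rw [List.length_take] at hi
  have hk1 : k - 1 < l.length := by omega
  calc mmin U ≤ (l.take k)[i] := mmin_le hq
    _ = l[i] := List.getElem_take
    _ ≤ l[k - 1] := sort_getElem_le_getElem (by omega) hk1
    _ = kth P k := by rw [← kth_succ_eq_getElem_s9 hk1, Nat.sub_add_cancel (by omega)]

theorem kth_le_mmax {k : ℕ} (hUP : U ≤ P) (hk : 1 ≤ k) (hkU : k ≤ Multiset.card U) :
    kth P k ≤ mmax U := by
  set l := P.sort (· ≤ ·)
  have hlen : l.length = Multiset.card P := Multiset.length_sort _
  have hUcard : Multiset.card U ≤ Multiset.card P := Multiset.card_le_card hUP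
  have hlargest : (↑(l.drop (k - 1)) : Multiset ℝ) ≤ P := by
    rw [← P.sort_eq (· ≤ ·), Multiset.coe_le]
    exact (List.drop_sublist _ _).subperm
  obtain ⟨q, hq, hqU⟩ := Multiset.exists_mem_mem_of_card_lt_add hUP hlargest (by
    simp only [Multiset.coe_card, List.length_drop, hlen]
    omega)
  obtain ⟨i, hi, rfl⟩ := List.getElem_of_mem (Multiset.mem_coe.mp hqU)
  rw [List.length_drop] at hi
  have hk1 : k - 1 < l.length := by omega
  have hki : k - 1 + i < l.length := by omega
  calc kth P k = l[k - 1] := by rw [← kth_succ_eq_getElem_s9 hk1, Nat.sub_add_cancel hk]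
    _ ≤ l[k - 1 + i] := sort_getElem_le_getElem (by omega) hki
    _ = (l.drop (k - 1))[i] := List.getElem_drop.symm
    _ ≤ mmax U := le_mmax hq

end OrderStatistics

theorem stmt_9 (n f : ℕ) (hnf : n > 5 * f) (P U : Multiset ℝ)
    (hP : Multiset.card P = n) (hUP : U ≤ P) (m : ℕ) (hm : Multiset.card U = m)
    (hmf : m ≥ n - f) :
    ∀ p ∈ U, (p + mmin U) / 2 ≤ dest n f P p ∧ dest n f P p ≤ (p + mmax U) / 2 := by
  intro p hp
  have hlow : mmin U ≤ kth P (2 * f + 1) := mmin_le_kth hUP (by omega) (by omega)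
  have hhigh : kth P (n - 2 * f) ≤ mmax U := kth_le_mmax hUP (by omega) (by omega)
  have hmin : mmin U ≤ min p (kth P (2 * f + 1)) := le_min (mmin_le hp) hlow
  have hmax : max p (kth P (n - 2 * f)) ≤ mmax U := max_le (le_mmax hp) hhigh
  have hp_min : min p (kth P (2 * f + 1)) ≤ p := min_le_left _ _
  have hp_max : p ≤ max p (kth P (n - 2 * f)) := le_max_left _ _
  constructor <;> · unfold dest; linarith
end
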